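/- Fix score vectors u, v ∈ ℝ^K with all coordinates in [−B, B], and let p_u = softmax(u), p_v = softmax(v). Then KL(p_u ‖ p_v) ≥ (e^{−2B}/2) · Var_{k∼Unif(1,…,K)}(δ_k), where δ_k = v_k − u_k and the variance is with respect to the uniform distribution on coordinates. -/

import Mathlib

open scoped BigOperators

noncomputable def softmax {K : ℕ} (z : Fin K → ℝ) : Fin K → ℝ :=
  fun k => Real.exp (z k) / ∑ j, Real.exp (z j)

noncomputable def klFin {K : ℕ} (p q : Fin K → ℝ) : ℝ :=
  ∑ k, p k * Real.log (p k / q k)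

/-!
With `δ = v - u`, the function `g t = log ∑ₖ exp (u k + t δ k)` satisfies
`KL(p_u ‖ p_v) = g 1 - g 0 - g' 0`, and `g'' t` is the variance of `δ` under `softmax (u + t δ)`.
On `[0, 1]` every score lies in `[-B, B]`, so each softmax weight is at least `e^{-2B}/K`; since a
variance is the minimum over `b` of `∑ₖ pₖ (δ k - b)²`, this bounds `g''` below by `e^{-2B}` times
the uniform variance of `δ`, and Taylor's theorem gives the claim.
-/

open Finset Real Set

section WeightedVariance

variable {ι : Type*} [Fintype ι]

noncomputable def weightedVariance (p δ : ι → ℝ) : ℝ :=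
  ∑ k, p k * δ k ^ 2 - (∑ k, p k * δ k) ^ 2

lemma sum_mul_sub_sq_eq_weightedVariance_add {p : ι → ℝ} (hp : ∑ k, p k = 1) (δ : ι → ℝ)
    (b : ℝ) :
    ∑ k, p k * (δ k - b) ^ 2 = weightedVariance p δ + (∑ k, p k * δ k - b) ^ 2 := by
  have hexpand : ∀ k, p k * (δ k - b) ^ 2 = p k * δ k ^ 2 - 2 * b * (p k * δ k) + b ^ 2 * p k :=
    fun k => by ring
  simp only [hexpand, sum_add_distrib, sum_sub_distrib, ← mul_sum, hp, weightedVariance]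
  ring

lemma weightedVariance_le_sum_mul_sub_sq {p : ι → ℝ} (hp : ∑ k, p k = 1) (δ : ι → ℝ) (b : ℝ) :
    weightedVariance p δ ≤ ∑ k, p k * (δ k - b) ^ 2 := by
  rw [sum_mul_sub_sq_eq_weightedVariance_add hp]
  exact le_add_of_nonneg_right (sq_nonneg _)

lemma mul_weightedVariance_le {p q : ι → ℝ} (hp : ∑ k, p k = 1) (hq : ∑ k, q k = 1) {c : ℝ}
    (hc : 0 ≤ c) (hqp : ∀ k, c * q k ≤ p k) (δ : ι → ℝ) :
    c * weightedVariance q δ ≤ weightedVariance p δ := by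
  set m := ∑ k, p k * δ k
  calc c * weightedVariance q δ ≤ c * ∑ k, q k * (δ k - m) ^ 2 :=
        mul_le_mul_of_nonneg_left (weightedVariance_le_sum_mul_sub_sq hq δ m) hc
    _ = ∑ k, c * q k * (δ k - m) ^ 2 := by simp only [mul_sum, mul_assoc]
    _ ≤ ∑ k, p k * (δ k - m) ^ 2 :=
        sum_le_sum fun k _ => mul_le_mul_of_nonneg_right (hqp k) (sq_nonneg _)
    _ = weightedVariance p δ := by
        rw [sum_mul_sub_sq_eq_weightedVariance_add hp, sub_self, sq, mul_zero, add_zero]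

end WeightedVariance

lemma monotoneOn_Icc_of_hasDerivAt_nonneg {f f' : ℝ → ℝ} {a b : ℝ}
    (hf : ∀ t ∈ Icc a b, HasDerivAt f (f' t) t) (hf' : ∀ t ∈ Icc a b, 0 ≤ f' t) :
    MonotoneOn f (Icc a b) := by
  refine monotoneOn_of_hasDerivWithinAt_nonneg (f' := f') (convex_Icc a b)
    (fun t ht => (hf t ht).continuousAt.continuousWithinAt) (fun t ht => ?_) (fun t ht => ?_)
  all_goals rw [interior_Icc] at ht
  · exact (hf t (Ioo_subset_Icc_self ht)).hasDerivWithinAt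
  · exact hf' t (Ioo_subset_Icc_self ht)

theorem add_deriv_mul_add_le_of_le_deriv2 {g g' g'' : ℝ → ℝ} {a b m : ℝ} (hab : a ≤ b)
    (hg : ∀ t ∈ Icc a b, HasDerivAt g (g' t) t) (hg' : ∀ t ∈ Icc a b, HasDerivAt g' (g'' t) t)
    (hm : ∀ t ∈ Icc a b, m ≤ g'' t) :
    g a + g' a * (b - a) + m / 2 * (b - a) ^ 2 ≤ g b := by
  have hslope : MonotoneOn (fun t => g' t - m * t) (Icc a b) :=
    monotoneOn_Icc_of_hasDerivAt_nonneg
      (fun t ht => by simpa using (hg' t ht).fun_sub ((hasDerivAt_id' t).const_mul m))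
      (fun t ht => sub_nonneg.2 (hm t ht))
  have ha : a ∈ Icc a b := left_mem_Icc.2 hab
  have hb : b ∈ Icc a b := right_mem_Icc.2 hab
  have hremainder : MonotoneOn (fun t => g t - (g' a - m * a) * t - m / 2 * t ^ 2) (Icc a b) := by
    refine monotoneOn_Icc_of_hasDerivAt_nonneg (f' := fun t => g' t - (g' a - m * a) - m * t)
      (fun t ht => ?_) (fun t ht => ?_)
    · refine (((hg t ht).fun_sub ((hasDerivAt_id' t).const_mul (g' a - m * a))).fun_sub
        ((hasDerivAt_pow 2 t).const_mul (m / 2))).congr_deriv ?_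
      push_cast
      ring
    · have hslope_ge := hslope ha ht ht.1
      simp only at hslope_ge
      linarith
  have hends := hremainder ha hb hab
  simp only at hends
  linear_combination hends

section Softmax

variable {K : ℕ}

lemma sum_exp_pos [NeZero K] (z : Fin K → ℝ) : 0 < ∑ k, exp (z k) :=
  sum_pos (fun _ _ => exp_pos _) univ_nonempty

lemma softmax_pos [NeZero K] (z : Fin K → ℝ) (k : Fin K) : 0 < softmax z k :=
  div_pos (exp_pos _) (sum_exp_pos z)

lemma sum_softmax [NeZero K] (z : Fin K → ℝ) : ∑ k, softmax z k = 1 := by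
  simp only [softmax, ← sum_div]
  exact div_self (sum_exp_pos z).ne'

lemma log_softmax [NeZero K] (z : Fin K → ℝ) (k : Fin K) :
    log (softmax z k) = z k - log (∑ j, exp (z j)) := by
  rw [softmax, log_div (exp_ne_zero _) (sum_exp_pos z).ne', log_exp]

lemma klFin_softmax [NeZero K] (u v : Fin K → ℝ) :
    klFin (softmax u) (softmax v) =
      log (∑ k, exp (v k)) - log (∑ k, exp (u k)) - ∑ k, softmax u k * (v k - u k) := by
  have hterm : ∀ k, softmax u k * log (softmax u k / softmax v k) =
      softmax u k * (log (∑ j, exp (v j)) - log (∑ j, exp (u j))) -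
        softmax u k * (v k - u k) := by
    intro k
    rw [log_div (softmax_pos u k).ne' (softmax_pos v k).ne', log_softmax, log_softmax]
    ring
  rw [klFin, sum_congr rfl fun k _ => hterm k, sum_sub_distrib, ← sum_mul, sum_softmax, one_mul]

lemma exp_neg_two_mul_div_le_softmax [NeZero K] {z : Fin K → ℝ} {B : ℝ} (hz : ∀ k, |z k| ≤ B)
    (k : Fin K) : exp (-(2 * B)) / K ≤ softmax z k := by
  have hsum : ∑ j, exp (z j) ≤ K * exp B :=
    calc ∑ j, exp (z j) ≤ ∑ _j : Fin K, exp B :=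
          sum_le_sum fun j _ => exp_le_exp.2 (abs_le.1 (hz j)).2
      _ = K * exp B := by simp
  calc exp (-(2 * B)) / K = exp (-B) / (K * exp B) := by
        rw [show -(2 * B) = -B - B by ring, exp_sub]
        ring
    _ ≤ softmax z k :=
        div_le_div₀ (exp_pos _).le (exp_le_exp.2 (abs_le.1 (hz k)).1) (sum_exp_pos z) hsum

lemma hasDerivAt_sum_exp_add_smul_mul (u δ w : Fin K → ℝ) (t : ℝ) :
    HasDerivAt (fun s => ∑ k, exp ((u + s • δ) k) * w k)
      (∑ k, exp ((u + t • δ) k) * δ k * w k) t := by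
  refine HasDerivAt.fun_sum fun k _ => ?_
  have hline : HasDerivAt (fun s => (u + s • δ) k) (δ k) t := by
    simpa using ((hasDerivAt_id' t).mul_const (δ k)).const_add (u k)
  exact hline.exp.mul_const (w k)

lemma hasDerivAt_sum_exp_add_smul (u δ : Fin K → ℝ) (t : ℝ) :
    HasDerivAt (fun s => ∑ k, exp ((u + s • δ) k)) (∑ k, exp ((u + t • δ) k) * δ k) t := by
  simpa only [Pi.one_apply, mul_one] using hasDerivAt_sum_exp_add_smul_mul u δ 1 t

lemma hasDerivAt_log_sum_exp_add_smul [NeZero K] (u δ : Fin K → ℝ) (t : ℝ) :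
    HasDerivAt (fun s => log (∑ k, exp ((u + s • δ) k)))
      (∑ k, softmax (u + t • δ) k * δ k) t := by
  convert (hasDerivAt_sum_exp_add_smul u δ t).log (sum_exp_pos _).ne' using 1
  simp only [softmax, sum_div, div_mul_eq_mul_div]

lemma hasDerivAt_softmax_mean_add_smul [NeZero K] (u δ : Fin K → ℝ) (t : ℝ) :
    HasDerivAt (fun s => ∑ k, softmax (u + s • δ) k * δ k)
      (weightedVariance (softmax (u + t • δ)) δ) t := by
  have hmean : (fun s : ℝ => ∑ k, softmax (u + s • δ) k * δ k) =
      fun s : ℝ => (∑ k, exp ((u + s • δ) k) * δ k) / ∑ k, exp ((u + s • δ) k) := by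
    funext s
    simp only [softmax, sum_div, div_mul_eq_mul_div]
  rw [hmean]
  refine ((hasDerivAt_sum_exp_add_smul_mul u δ δ t).fun_div (hasDerivAt_sum_exp_add_smul u δ t)
    (sum_exp_pos _).ne').congr_deriv ?_
  simp only [weightedVariance, softmax, div_mul_eq_mul_div, mul_assoc, ← sum_div]
  field_simp

end Softmax

theorem stmt_3_general {K : ℕ} (hK : 2 ≤ K) (B : ℝ)
    (u v : Fin K → ℝ)
    (hu : ∀ k, |u k| ≤ B) (hv : ∀ k, |v k| ≤ B) :
    (Real.exp (-(2 * B)) / 2) *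
        ((1 / (K : ℝ)) * ∑ k, (v k - u k) ^ 2
          - ((1 / (K : ℝ)) * ∑ k, (v k - u k)) ^ 2)
      ≤ klFin (softmax u) (softmax v) := by
  have : NeZero K := ⟨by omega⟩
  have hsegment : ∀ t ∈ Icc (0 : ℝ) 1, ∀ k, |(u + t • (v - u)) k| ≤ B := fun t ht k =>
    abs_le.2 ((convex_Icc (-B) B).add_smul_sub_mem (abs_le.1 (hu k)) (abs_le.1 (hv k)) ht)
  have hcurv : ∀ t ∈ Icc (0 : ℝ) 1,
      exp (-(2 * B)) * weightedVariance (fun _ => 1 / (K : ℝ)) (v - u) ≤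
        weightedVariance (softmax (u + t • (v - u))) (v - u) := fun t ht =>
    mul_weightedVariance_le (sum_softmax _) (by simp) (exp_pos _).le
      (fun k => by rw [mul_one_div]; exact exp_neg_two_mul_div_le_softmax (hsegment t ht) k) _
  have htaylor := add_deriv_mul_add_le_of_le_deriv2 zero_le_one
    (fun t _ => hasDerivAt_log_sum_exp_add_smul u (v - u) t)
    (fun t _ => hasDerivAt_softmax_mean_add_smul u (v - u) t) hcurv
  rw [klFin_softmax]
  simp only [zero_smul, one_smul, add_zero, add_sub_cancel, sub_zero, one_pow, mul_one,
    Pi.sub_apply, weightedVariance, ← mul_sum] at htaylor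
  linarith

theorem stmt_3 {K : ℕ} (hK : 2 ≤ K) (B : ℝ) (hB : 0 ≤ B)
    (u v : Fin K → ℝ)
    (hu : ∀ k, |u k| ≤ B) (hv : ∀ k, |v k| ≤ B) :
    (Real.exp (-(2 * B)) / 2) *
        ((1 / (K : ℝ)) * ∑ k, (v k - u k) ^ 2
          - ((1 / (K : ℝ)) * ∑ k, (v k - u k)) ^ 2)
      ≤ klFin (softmax u) (softmax v) :=
  stmt_3_general hK B u v hu hv
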